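/- Let σ be a permutation of F_2^n with c p-cycles and f fixed points acting on a self-dual code C (p an odd prime), and let C_φ = φ(E_σ(C)^*) ⊆ P^c. For any integer t with 1 ≤ t ≤ p-1, applying the substitution x → x^t to every coordinate of every codeword of C_φ yields a code C_φ' such that the binary code C' reconstructed from (C_π, C_φ') is equivalent to C (i.e., C' is obtained from C by a coordinate permutation). -/

import Mathlib

open Finset

/-- Hamming weight of a binary vector. -/
def wt {ι : Type*} [Fintype ι] (v : ι → ZMod 2) : ℕ :=
  (Finset.univ.filter fun i => v i ≠ 0).card

/-- Dual of a binary code under the standard dot product. -/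
def dualCode {ι : Type*} [Fintype ι] (C : Submodule (ZMod 2) (ι → ZMod 2)) :
    Submodule (ZMod 2) (ι → ZMod 2) where
  carrier := {x | ∀ c ∈ C, ∑ i, x i * c i = 0}
  add_mem' := by
    intro a b ha hb c hc
    have := ha c hc; have := hb c hc
    simp only [Pi.add_apply, add_mul, Finset.sum_add_distrib]
    simp [ha c hc, hb c hc]
  zero_mem' := by intro c hc; simp
  smul_mem' := by
    intro r a ha c hc
    simp only [Pi.smul_apply, smul_eq_mul, mul_assoc, ← Finset.mul_sum]
    simp [ha c hc]

/-- Fixed subcode F_σ(C). -/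
def fixedCode {ι : Type*} (σ : Equiv.Perm ι) (C : Submodule (ZMod 2) (ι → ZMod 2)) :
    Submodule (ZMod 2) (ι → ZMod 2) where
  carrier := {v | v ∈ C ∧ v ∘ σ = v}
  add_mem' := by
    rintro a b ⟨ha, ha'⟩ ⟨hb, hb'⟩
    refine ⟨C.add_mem ha hb, ?_⟩
    funext i
    simpa using congrFun (congrArg₂ (· + ·) ha' hb') i
  zero_mem' := ⟨C.zero_mem, rfl⟩
  smul_mem' := by
    rintro r a ⟨ha, ha'⟩
    exact ⟨C.smul_mem r ha, by funext i; simpa using congrArg (r • ·) (congrFun ha' i)⟩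

/-- Subcode E_σ(C): codewords with even weight on each cycle (and zero on fixed points). -/
def evenCode {ι : Type*} (p : ℕ) (σ : Equiv.Perm ι) (C : Submodule (ZMod 2) (ι → ZMod 2)) :
    Submodule (ZMod 2) (ι → ZMod 2) where
  carrier := {v | v ∈ C ∧ ∀ i, ∑ k ∈ Finset.range p, v ((σ ^ k) i) = 0}
  add_mem' := by
    rintro a b ⟨ha, ha'⟩ ⟨hb, hb'⟩
    refine ⟨C.add_mem ha hb, fun i => ?_⟩
    simp [Finset.sum_add_distrib, ha' i, hb' i]
  zero_mem' := ⟨C.zero_mem, by simp⟩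
  smul_mem' := by
    rintro r a ⟨ha, ha'⟩
    refine ⟨C.smul_mem r ha, fun i => ?_⟩
    simp only [Pi.smul_apply, smul_eq_mul]
    rw [← Finset.mul_sum, ha' i, mul_zero]

/-- Coordinate index set for an automorphism of type p-(c,f): `c` cycles of
length `p` followed by `f` fixed points. -/
abbrev Idx (p c f : ℕ) : Type := (Fin c × Fin p) ⊕ Fin f

/-- The standard permutation with `c` cycles of length `p` and `f` fixed points. -/
def stdPerm (p c f : ℕ) : Equiv.Perm (Idx p c f) :=
  Equiv.sumCongr (Equiv.prodCongr (Equiv.refl (Fin c)) (finRotate p)) (Equiv.refl (Fin f))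

/-- The projection π recording one bit per cycle and the fixed-point bits. -/
def proj (p c f : ℕ) [NeZero p] :
    (Idx p c f → ZMod 2) →ₗ[ZMod 2] ((Fin c ⊕ Fin f) → ZMod 2) where
  toFun v := Sum.elim (fun j => v (Sum.inl (j, 0))) (fun l => v (Sum.inr l))
  map_add' := by intro a b; funext i; cases i <;> simp
  map_smul' := by intro r a; funext i; cases i <;> simp

open Polynomial

/-- The ring F_2[x]/(x^p - 1). -/
abbrev Rp (p : ℕ) : Type :=
  Polynomial (ZMod 2) ⧸ Ideal.span {(Polynomial.X : Polynomial (ZMod 2)) ^ p - 1}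

/-- The quotient map F_2[x] → F_2[x]/(x^p - 1). -/
noncomputable def mkp (p : ℕ) : Polynomial (ZMod 2) →+* Rp p := Ideal.Quotient.mk _

/-- The ideal P of even-weight elements of F_2[x]/(x^p-1), generated by x - 1. -/
noncomputable def evenIdeal (p : ℕ) : Ideal (Rp p) :=
  Ideal.span {mkp p (Polynomial.X - 1)}

/-- Multiplication on (the subtype of) an ideal of a commutative ring. -/
noncomputable instance idealMul {R : Type*} [CommRing R] (I : Ideal R) : Mul I :=
  ⟨fun a b => ⟨a.1 * b.1, I.mul_mem_left a.1 b.2⟩⟩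
/-- The map φ sending a binary vector to its tuple of cycle-block polynomials. -/
noncomputable def phiMap (p c f : ℕ) :
    (Idx p c f → ZMod 2) →ₗ[ZMod 2] (Fin c → Rp p) where
  toFun v := fun j => ∑ k : Fin p, v (Sum.inl (j, k)) • (mkp p X) ^ (k : ℕ)
  map_add' := by
    intro a b; funext j
    simp [add_smul, Finset.sum_add_distrib]
  map_smul' := by
    intro r a; funext j
    simp [mul_smul, Finset.smul_sum]

/-- The ring endomorphism of F_2[x]/(x^p-1) induced by the substitution x ↦ x^t. -/
noncomputable def substHom (p t : ℕ) : Rp p →+* Rp p :=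
  Ideal.Quotient.lift _
    ((mkp p).comp (Polynomial.eval₂RingHom Polynomial.C (Polynomial.X ^ t)))
    (by
      intro a ha
      rw [Ideal.mem_span_singleton] at ha
      obtain ⟨b, rfl⟩ := ha
      simp only [RingHom.comp_apply, map_mul, coe_eval₂RingHom, eval₂_sub, eval₂_pow,
        eval₂_X, eval₂_one]
      have h2 : ((X : Polynomial (ZMod 2)) ^ p - 1) ∣ ((X ^ t) ^ p - 1) := by
        have := sub_dvd_pow_sub_pow ((X : Polynomial (ZMod 2)) ^ p) 1 t
        simpa [one_pow, ← pow_mul, Nat.mul_comm] using this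
      have h3 : mkp p ((X ^ t) ^ p - 1) = 0 :=
        (Ideal.Quotient.eq_zero_iff_mem).mpr (Ideal.mem_span_singleton.mpr h2)
      rw [h3, zero_mul])

/-- The lift sending a length-(c+f) vector to the corresponding vector constant on
each cycle. -/
def liftF (p c f : ℕ) : ((Fin c ⊕ Fin f) → ZMod 2) →ₗ[ZMod 2] (Idx p c f → ZMod 2) where
  toFun w := Sum.elim (fun jk => w (Sum.inl jk.1)) (fun l => w (Sum.inr l))
  map_add' := by intro a b; funext i; cases i <;> simp
  map_smul' := by intro r a; funext i; cases i <;> simp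

/-- The subspace of vectors vanishing on all fixed-point coordinates. -/
def zeroOnFixed (p c f : ℕ) : Submodule (ZMod 2) (Idx p c f → ZMod 2) where
  carrier := {v | ∀ l, v (Sum.inr l) = 0}
  add_mem' := by intro a b ha hb l; simp [ha l, hb l]
  zero_mem' := by intro l; rfl
  smul_mem' := by intro r a ha l; simp [ha l]

/-!
On a cycle block, `φ` turns the coordinate permutation `k ↦ t k mod p` into the substitution
`x ↦ x ^ t` (because `x ^ p = 1`), so `C_φ'` is `φ` of the image of `E_σ(C)` under the block
permutation `ρ`; as `1, x, …, x ^ (p - 1)` are linearly independent, `φ` is injective on vectors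
vanishing at the fixed points, so the second part of the reconstruction is exactly `ρ(E_σ(C))`.
Since `p` is odd, `C = F_σ(C) + E_σ(C)` (split `v` off its orbit sum), and `F_σ(C)`, whose words
are constant on cycles, is `ρ`-invariant and is recovered from `C_π`. Hence the reconstructed code
is `ρ(F_σ(C) + E_σ(C)) = ρ(C)`.
-/

lemma Submodule.comap_map_inf_of_injOn {R M N : Type*} [Ring R] [AddCommGroup M]
    [AddCommGroup N] [Module R M] [Module R N] {f : M →ₗ[R] N} {Z D : Submodule R M}
    (hf : Set.InjOn f Z) (hD : D ≤ Z) : (D.map f).comap f ⊓ Z = D := by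
  refine le_antisymm ?_ fun v hv => ⟨Submodule.mem_map_of_mem hv, hD hv⟩
  rintro v ⟨⟨d, hd, hdv⟩, hv⟩
  rwa [← hf (hD hd) hv hdv]

section Orbit

variable {ι : Type*} {σ : Equiv.Perm ι}

lemma comp_pow_eq_self {v : ι → ZMod 2} (hv : v ∘ σ = v) (k : ℕ) : v ∘ ⇑(σ ^ k) = v := by
  induction k with
  | zero => rfl
  | succ k ih => rw [pow_succ, Equiv.Perm.coe_mul, ← Function.comp_assoc, ih, hv]

lemma comp_pow_mem {C : Submodule (ZMod 2) (ι → ZMod 2)} (hC : ∀ v ∈ C, v ∘ σ ∈ C)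
    {v : ι → ZMod 2} (hv : v ∈ C) (k : ℕ) : v ∘ ⇑(σ ^ k) ∈ C := by
  induction k with
  | zero => exact hv
  | succ k ih => rw [pow_succ, Equiv.Perm.coe_mul, ← Function.comp_assoc]; exact hC _ ih

def orbitSum (p : ℕ) (σ : Equiv.Perm ι) (v : ι → ZMod 2) : ι → ZMod 2 :=
  fun i => ∑ k ∈ range p, v ((σ ^ k) i)

lemma orbitSum_comp_self {p : ℕ} (hσ : σ ^ p = 1) (v : ι → ZMod 2) :
    orbitSum p σ v ∘ σ = orbitSum p σ v := by
  funext i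
  have hshift : ∀ k, v ((σ ^ k) (σ i)) = v ((σ ^ (k + 1)) i) := fun k => by
    rw [pow_succ, Equiv.Perm.mul_apply]
  have hrot := sum_range_succ' (fun k => v ((σ ^ k) i)) p
  rw [sum_range_succ, hσ, pow_zero] at hrot
  simp only [Function.comp_apply, orbitSum, hshift]
  exact (add_right_cancel hrot).symm

lemma orbitSum_mem {p : ℕ} {C : Submodule (ZMod 2) (ι → ZMod 2)} (hC : ∀ v ∈ C, v ∘ σ ∈ C)
    {v : ι → ZMod 2} (hv : v ∈ C) : orbitSum p σ v ∈ C := by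
  have : orbitSum p σ v = ∑ k ∈ range p, v ∘ ⇑(σ ^ k) := by
    funext i; simp [orbitSum, Finset.sum_apply]
  rw [this]
  exact C.sum_mem fun k _ => comp_pow_mem hC hv k

lemma sum_range_pow_apply_eq {p : ℕ} (hodd : Odd p) {v : ι → ZMod 2} {i : ι}
    (hv : ∀ k, v ((σ ^ k) i) = v i) : ∑ k ∈ range p, v ((σ ^ k) i) = v i := by
  rw [sum_congr rfl fun k _ => hv k, sum_const, card_range, nsmul_eq_mul,
    ZMod.natCast_eq_one_iff_odd.mpr hodd, one_mul]

theorem fixedCode_sup_evenCode {p : ℕ} (hodd : Odd p) (hσ : σ ^ p = 1)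
    {C : Submodule (ZMod 2) (ι → ZMod 2)} (hC : ∀ v ∈ C, v ∘ σ ∈ C) :
    fixedCode σ C ⊔ evenCode p σ C = C := by
  refine le_antisymm (sup_le (fun v hv => hv.1) fun v hv => hv.1) fun v hv => ?_
  set a := orbitSum p σ v
  have ha : a ∘ σ = a := orbitSum_comp_self hσ v
  have heven : ∀ i, ∑ k ∈ range p, (v + a) ((σ ^ k) i) = 0 := fun i => by
    simp only [Pi.add_apply, sum_add_distrib,
      sum_range_pow_apply_eq hodd fun k => congrFun (comp_pow_eq_self ha k) i]
    exact ZModModule.add_self (a i)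
  refine Submodule.mem_sup.mpr ⟨a, ⟨orbitSum_mem hC hv, ha⟩, v + a,
    ⟨C.add_mem hv (orbitSum_mem hC hv), heven⟩, ?_⟩
  rw [add_left_comm, ZModModule.add_self, add_zero]

end Orbit

section PermCode

variable {ι : Type*}

def permCode (ρ : Equiv.Perm ι) (C : Submodule (ZMod 2) (ι → ZMod 2)) :
    Submodule (ZMod 2) (ι → ZMod 2) :=
  C.comap (LinearMap.funLeft (ZMod 2) (ZMod 2) ρ)

lemma mem_permCode {ρ : Equiv.Perm ι} {C : Submodule (ZMod 2) (ι → ZMod 2)} {v : ι → ZMod 2} :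
    v ∈ permCode ρ C ↔ v ∘ ρ ∈ C :=
  Iff.rfl

lemma permCode_sup (ρ : Equiv.Perm ι) (A B : Submodule (ZMod 2) (ι → ZMod 2)) :
    permCode ρ (A ⊔ B) = permCode ρ A ⊔ permCode ρ B := by
  have hrange := LinearMap.range_eq_top.mpr
    (LinearMap.funLeft_surjective_of_injective (ZMod 2) (ZMod 2) ρ ρ.injective)
  exact Submodule.comap_sup_of_injective
    (LinearMap.funLeft_injective_of_surjective _ _ ρ ρ.surjective)
    (hrange ▸ le_top) (hrange ▸ le_top)

end PermCode

section Blocks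

variable {p c f : ℕ}

def blockPerm (p c f : ℕ) : Equiv.Perm (Fin p) →* Equiv.Perm (Idx p c f) where
  toFun τ := Equiv.sumCongr (Equiv.prodCongr (Equiv.refl (Fin c)) τ) (Equiv.refl (Fin f))
  map_one' := by ext (⟨j, k⟩ | l) <;> rfl
  map_mul' τ τ' := by ext (⟨j, k⟩ | l) <;> rfl

@[simp] lemma blockPerm_inl (τ : Equiv.Perm (Fin p)) (j : Fin c) (k : Fin p) :
    blockPerm p c f τ (Sum.inl (j, k)) = Sum.inl (j, τ k) := rfl

@[simp] lemma blockPerm_inr (τ : Equiv.Perm (Fin p)) (l : Fin f) :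
    blockPerm p c f τ (Sum.inr l) = Sum.inr l := rfl

lemma stdPerm_eq_blockPerm : stdPerm p c f = blockPerm p c f (finRotate p) := rfl

open Fin.NatCast in
lemma finRotate_pow_apply [NeZero p] (k : ℕ) (i : Fin p) : (finRotate p ^ k) i = i + k := by
  induction k with
  | zero => simp
  | succ k ih => rw [pow_succ', Equiv.Perm.mul_apply, ih, finRotate_apply, Nat.cast_succ, add_assoc]

lemma finRotate_pow_self [NeZero p] : finRotate p ^ p = 1 := by
  ext i
  simp [finRotate_pow_apply]

lemma stdPerm_pow_self [NeZero p] : stdPerm p c f ^ p = 1 := by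
  rw [stdPerm_eq_blockPerm, ← map_pow, finRotate_pow_self, map_one]

lemma apply_inl_eq_of_comp_stdPerm [NeZero p] {v : Idx p c f → ZMod 2}
    (hv : v ∘ stdPerm p c f = v) (j : Fin c) (k k' : Fin p) :
    v (Sum.inl (j, k)) = v (Sum.inl (j, k')) := by
  have hzero : ∀ k : Fin p, v (Sum.inl (j, k)) = v (Sum.inl (j, 0)) := fun k => by
    have := congrFun (comp_pow_eq_self hv k) (Sum.inl (j, 0))
    rwa [Function.comp_apply, stdPerm_eq_blockPerm, ← map_pow, blockPerm_inl, finRotate_pow_apply,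
      zero_add, Fin.cast_val_eq_self] at this
  rw [hzero k, hzero k']

lemma comp_blockPerm_of_comp_stdPerm [NeZero p] {v : Idx p c f → ZMod 2}
    (hv : v ∘ stdPerm p c f = v) (τ : Equiv.Perm (Fin p)) : v ∘ blockPerm p c f τ = v := by
  funext x
  rcases x with ⟨j, k⟩ | l
  · exact apply_inl_eq_of_comp_stdPerm hv j (τ k) k
  · rfl

lemma liftF_proj_of_comp_stdPerm [NeZero p] {v : Idx p c f → ZMod 2}
    (hv : v ∘ stdPerm p c f = v) : liftF p c f (proj p c f v) = v := by
  funext x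
  rcases x with ⟨j, k⟩ | l
  · exact apply_inl_eq_of_comp_stdPerm hv j 0 k
  · rfl

lemma map_liftF_map_proj_fixedCode [NeZero p] (C : Submodule (ZMod 2) (Idx p c f → ZMod 2)) :
    ((fixedCode (stdPerm p c f) C).map (proj p c f)).map (liftF p c f) =
      fixedCode (stdPerm p c f) C := by
  ext v
  rw [← Submodule.map_comp]
  constructor
  · rintro ⟨a, ha, rfl⟩
    rwa [LinearMap.comp_apply, liftF_proj_of_comp_stdPerm ha.2]
  · exact fun hv => ⟨v, hv, liftF_proj_of_comp_stdPerm hv.2⟩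

lemma permCode_blockPerm_fixedCode [NeZero p] (τ : Equiv.Perm (Fin p))
    (C : Submodule (ZMod 2) (Idx p c f → ZMod 2)) :
    permCode (blockPerm p c f τ) (fixedCode (stdPerm p c f) C) =
      fixedCode (stdPerm p c f) C := by
  ext v
  rw [mem_permCode]
  constructor
  · intro hv
    have hinv := comp_blockPerm_of_comp_stdPerm hv.2 τ⁻¹
    rw [Function.comp_assoc, ← Equiv.Perm.coe_mul, ← map_mul, mul_inv_cancel, map_one,
      Equiv.Perm.coe_one, Function.comp_id] at hinv
    rwa [hinv]
  · intro hv
    rwa [comp_blockPerm_of_comp_stdPerm hv.2]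

lemma evenCode_le_zeroOnFixed (hodd : Odd p) (C : Submodule (ZMod 2) (Idx p c f → ZMod 2)) :
    evenCode p (stdPerm p c f) C ≤ zeroOnFixed p c f := by
  intro v hv l
  rw [← hv.2 (Sum.inr l), sum_range_pow_apply_eq hodd fun k => ?_]
  rw [stdPerm_eq_blockPerm, ← map_pow, blockPerm_inr]

end Blocks

section Polynomials

variable {p : ℕ}

lemma mkp_X_pow_self (p : ℕ) : mkp p X ^ p = 1 := by
  rw [← map_pow, ← map_one (mkp p), ← sub_eq_zero, ← map_sub]
  exact Ideal.Quotient.eq_zero_iff_mem.mpr (Ideal.mem_span_singleton_self _)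

lemma substHom_mkp_X_pow (t k : ℕ) : substHom p t (mkp p X ^ k) = mkp p X ^ (t * k) := by
  rw [map_pow, pow_mul, ← map_pow (mkp p)]
  exact congrArg (· ^ k) ((Ideal.Quotient.lift_mk _ _ _).trans (by simp))

lemma linearIndependent_mkp_X_pow [NeZero p] :
    LinearIndependent (ZMod 2) fun k : Fin p => mkp p X ^ (k : ℕ) := by
  have hmonic : (X ^ p - 1 : (ZMod 2)[X]).Monic := by
    simpa using monic_X_pow_sub_C (1 : ZMod 2) (NeZero.ne p)
  have hdeg : (AdjoinRoot.powerBasis' hmonic).dim = p := by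
    simpa using natDegree_X_pow_sub_C (n := p) (r := (1 : ZMod 2))
  have hbasis := (AdjoinRoot.powerBasis' hmonic).basis.linearIndependent
  rw [PowerBasis.coe_basis] at hbasis
  exact hbasis.comp (Fin.cast hdeg.symm) (Fin.cast_injective _)

end Polynomials

section Substitution

variable {p c f : ℕ}

noncomputable def substPi (p t c : ℕ) : (Fin c → Rp p) →ₗ[ZMod 2] (Fin c → Rp p) :=
  LinearMap.compLeft ((substHom p t).toAddMonoidHom.toZModLinearMap 2) (Fin c)

lemma coe_substPi (t : ℕ) : ⇑(substPi p t c) = fun u j => substHom p t (u j) := rfl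

noncomputable def mulPerm (p t : ℕ) [NeZero p] (ht : t.Coprime p) : Equiv.Perm (Fin p) :=
  Equiv.ofBijective (fun k => ⟨t * k % p, Nat.mod_lt _ (NeZero.pos p)⟩) <|
    Finite.injective_iff_bijective.mp fun k k' hkk' => Fin.ext <| by
      have := Nat.ModEq.cancel_left_of_coprime ht.symm (Fin.val_eq_of_eq hkk')
      rwa [Nat.ModEq, Nat.mod_eq_of_lt k.isLt, Nat.mod_eq_of_lt k'.isLt] at this

lemma substPi_phiMap_comp_blockPerm [NeZero p] {t : ℕ} (ht : t.Coprime p)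
    (v : Idx p c f → ZMod 2) :
    substPi p t c (phiMap p c f (v ∘ blockPerm p c f (mulPerm p t ht))) = phiMap p c f v := by
  funext j
  change (substHom p t).toAddMonoidHom.toZModLinearMap 2
      (∑ k : Fin p, v (Sum.inl (j, mulPerm p t ht k)) • mkp p X ^ (k : ℕ)) =
    ∑ k : Fin p, v (Sum.inl (j, k)) • mkp p X ^ (k : ℕ)
  rw [map_sum, ← Equiv.sum_comp (mulPerm p t ht) fun k => v (Sum.inl (j, k)) • mkp p X ^ (k : ℕ)]
  refine sum_congr rfl fun k _ => ?_
  rw [map_smul]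
  congr 1
  change substHom p t (mkp p X ^ (k : ℕ)) = mkp p X ^ (t * k % p)
  rw [substHom_mkp_X_pow, ← pow_eq_pow_mod _ (mkp_X_pow_self p)]

lemma phiMap_injOn [NeZero p] : Set.InjOn (phiMap p c f) (zeroOnFixed p c f) := by
  intro v hv w hw hvw
  funext x
  rcases x with ⟨j, k⟩ | l
  · have hj : ∑ k : Fin p, (v (Sum.inl (j, k)) - w (Sum.inl (j, k))) • mkp p X ^ (k : ℕ) = 0 := by
      simp only [sub_smul, sum_sub_distrib]
      exact sub_eq_zero.mpr (congrFun hvw j)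
    exact sub_eq_zero.mp (Fintype.linearIndependent_iff.mp linearIndependent_mkp_X_pow _ hj k)
  · rw [hv l, hw l]

lemma map_substPi_map_phiMap [NeZero p] {t : ℕ} (ht : t.Coprime p)
    (D : Submodule (ZMod 2) (Idx p c f → ZMod 2)) :
    (D.map (phiMap p c f)).map (substPi p t c) =
      (permCode (blockPerm p c f (mulPerm p t ht)) D).map (phiMap p c f) := by
  have hcomp : (substPi p t c ∘ₗ phiMap p c f) ∘ₗ
      LinearMap.funLeft (ZMod 2) (ZMod 2) (blockPerm p c f (mulPerm p t ht)) = phiMap p c f :=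
    LinearMap.ext (substPi_phiMap_comp_blockPerm ht)
  conv_lhs => rw [← Submodule.map_comap_eq_of_surjective
    (LinearMap.funLeft_surjective_of_injective _ _ _
      (blockPerm p c f (mulPerm p t ht)).injective) D]
  rw [← Submodule.map_comp, ← Submodule.map_comp, hcomp]
  rfl

lemma comap_phiMap_span_substHom_image_inf_zeroOnFixed [NeZero p] {t : ℕ} (ht : t.Coprime p)
    {D : Submodule (ZMod 2) (Idx p c f → ZMod 2)} (hD : D ≤ zeroOnFixed p c f) :
    (Submodule.span (ZMod 2) ((fun u : Fin c → Rp p => fun j => substHom p t (u j)) ''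
        D.map (phiMap p c f))).comap (phiMap p c f) ⊓ zeroOnFixed p c f =
      permCode (blockPerm p c f (mulPerm p t ht)) D := by
  rw [← coe_substPi, ← Submodule.map_coe, Submodule.span_eq, map_substPi_map_phiMap ht]
  exact Submodule.comap_map_inf_of_injOn phiMap_injOn fun v hv l => hD hv l

end Substitution

theorem statement13_general {p c f : ℕ} [NeZero p] (hp : p.Prime) (hodd : Odd p)
    (t : ℕ) (ht1 : 1 ≤ t) (ht2 : t ≤ p - 1)
    (C : Submodule (ZMod 2) (Idx p c f → ZMod 2))
    (haut : ∀ v, v ∈ C ↔ v ∘ (stdPerm p c f) ∈ C) :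
    ∃ ρ : Equiv.Perm (Idx p c f),
      ∀ v : Idx p c f → ZMod 2,
        (v ∈ Submodule.map (liftF p c f)
            (Submodule.map (proj p c f) (fixedCode (stdPerm p c f) C)) ⊔
          (Submodule.comap (phiMap p c f)
            (Submodule.span (ZMod 2)
              ((fun u : Fin c → Rp p => fun j => substHom p t (u j)) ''
                (Submodule.map (phiMap p c f) (evenCode p (stdPerm p c f) C)))) ⊓
            zeroOnFixed p c f)) ↔ v ∘ ρ ∈ C := by
  have ht : t.Coprime p := (Nat.coprime_of_lt_prime (by omega) (by omega) hp).symm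
  refine ⟨blockPerm p c f (mulPerm p t ht), fun v => ?_⟩
  rw [map_liftF_map_proj_fixedCode,
    comap_phiMap_span_substHom_image_inf_zeroOnFixed ht (evenCode_le_zeroOnFixed hodd C),
    ← permCode_blockPerm_fixedCode (mulPerm p t ht), ← permCode_sup,
    fixedCode_sup_evenCode hodd stdPerm_pow_self fun v => (haut v).mp, mem_permCode]

/-- Substituting x → x^t (1 ≤ t ≤ p-1) in every coordinate of `C_φ` and reconstructing
a binary code from `(C_π, C_φ')` yields a code equivalent to `C` (i.e. obtained from
`C` by a coordinate permutation). -/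
theorem statement13 {p c f : ℕ} [NeZero p] (hp : p.Prime) (hodd : Odd p)
    (t : ℕ) (ht1 : 1 ≤ t) (ht2 : t ≤ p - 1)
    (C : Submodule (ZMod 2) (Idx p c f → ZMod 2))
    (hself : C = dualCode C)
    (haut : ∀ v, v ∈ C ↔ v ∘ (stdPerm p c f) ∈ C) :
    ∃ ρ : Equiv.Perm (Idx p c f),
      ∀ v : Idx p c f → ZMod 2,
        (v ∈ Submodule.map (liftF p c f)
            (Submodule.map (proj p c f) (fixedCode (stdPerm p c f) C)) ⊔
          (Submodule.comap (phiMap p c f)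
            (Submodule.span (ZMod 2)
              ((fun u : Fin c → Rp p => fun j => substHom p t (u j)) ''
                (Submodule.map (phiMap p c f) (evenCode p (stdPerm p c f) C)))) ⊓
            zeroOnFixed p c f)) ↔ v ∘ ρ ∈ C :=
  statement13_general hp hodd t ht1 ht2 C haut
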